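/- Let a, b ∈ [0, 1) and let z ∈ ℂ with |z| ≥ 6 and z ∉ (−∞,−1)∪(1,∞). Then |F̃_{a,b}(z)| > 1. -/

import Mathlib

/-!
Write `W(t) = (1 - t)^{b/2} t^{-(1+b)/2}`, so that the Beta factor is `B = ∫₀¹ W`, and
`s = (1 - a)/2 ∈ (0, 1/2]`; the claim is `B < ‖z‖ ‖∫₀¹ W(t) (1 - z²t)^{-s} dt‖`.
Since `z` is not real, `Im (1 - z²t) = -t Im (z²)` has a fixed sign and `1 - z²t` never meets
`(-∞, 0]`, so all values `(1 - z²t)^{-s}` lie in one closed quadrant; there the norm of the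
integral is at least `1/√2` times the integral of the norm.
Pointwise `‖z‖ ‖(1 - z²t)^{-s}‖ ≥ (t + δ)^{-1/2}` with `δ = ‖z‖⁻² ≤ 1/36`. As `W` is decreasing and
`(t + δ)^{-1/2} - 3/2` changes sign once, from `+` to `-`, the `W`-weighted integral of the latter
is at least a nonnegative multiple of its plain integral, which is positive. Hence
`3/2 · B ≤ √2 ‖z‖ ‖∫₀¹ W(t) (1 - z²t)^{-s} dt‖`, and `√2 < 3/2`.
-/

noncomputable section

open Real Set MeasureTheory intervalIntegral

/-- The Beta function `B(x,y) = ∫₀¹ t^{x−1}(1−t)^{y−1} dt`. -/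
def betaFun (x y : ℝ) : ℝ :=
  ∫ t in (0 : ℝ)..1, t ^ (x - 1) * (1 - t) ^ (y - 1)

/-- The analytic continuation `F̃_{a,b}` of `ρ·₂F₁((1−a)/2,(1−b)/2;3/2;ρ²)` given by the
Euler-type integral
`F̃_{a,b}(z) = B((1−b)/2, 1+b/2)⁻¹ · z · ∫₀¹ (1−t)^{b/2} t^{−(1+b)/2} (1−z²t)^{−(1−a)/2} dt`. -/
def Ftilde (a b : ℝ) (z : ℂ) : ℂ :=
  ((betaFun ((1 - b) / 2) (1 + b / 2) : ℝ) : ℂ)⁻¹ *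
    (z * ∫ t in (0 : ℝ)..1,
      (((1 - t) ^ (b / 2) * t ^ (-(1 + b) / 2) : ℝ) : ℂ) *
        ((1 : ℂ) - z ^ 2 * (t : ℂ)) ^ ((-((1 - a) / 2) : ℝ) : ℂ))

def eulerWeight (b t : ℝ) : ℝ := (1 - t) ^ (b / 2) * t ^ (-(1 + b) / 2)

lemma eulerWeight_nonneg (b : ℝ) {t : ℝ} (ht : t ∈ Icc (0:ℝ) 1) : 0 ≤ eulerWeight b t :=
  mul_nonneg (rpow_nonneg (by linarith [ht.2]) _) (rpow_nonneg ht.1 _)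

lemma eulerWeight_pos (b : ℝ) {t : ℝ} (ht : t ∈ Ioo (0:ℝ) 1) : 0 < eulerWeight b t :=
  mul_pos (rpow_pos_of_pos (by linarith [ht.2]) _) (rpow_pos_of_pos ht.1 _)

lemma antitoneOn_eulerWeight {b : ℝ} (hb : 0 ≤ b) : AntitoneOn (eulerWeight b) (Ioc 0 1) := by
  intro s hs t ht hst
  exact mul_le_mul (rpow_le_rpow (by linarith [ht.2]) (by linarith) (by linarith))
    (rpow_le_rpow_of_nonpos hs.1 hst (by linarith)) (rpow_nonneg ht.1.le _)
    (rpow_nonneg (by linarith [hs.2]) _)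

lemma intervalIntegrable_eulerWeight {b : ℝ} (hb0 : 0 ≤ b) (hb1 : b < 1) :
    IntervalIntegrable (eulerWeight b) volume 0 1 := by
  have hcont : Continuous fun t : ℝ => (1 - t) ^ (b / 2) :=
    (continuous_const.sub continuous_id).rpow_const fun _ => Or.inr (by linarith)
  exact (intervalIntegrable_rpow' (by linarith)).continuousOn_mul hcont.continuousOn

lemma betaFun_eq_integral_eulerWeight (b : ℝ) :
    betaFun ((1 - b) / 2) (1 + b / 2) = ∫ t in (0:ℝ)..1, eulerWeight b t := by
  refine integral_congr fun t _ => ?_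
  rw [eulerWeight, mul_comm]
  ring_nf

lemma mul_integral_le_integral_mul_of_antitoneOn {W φ : ℝ → ℝ} {a b c : ℝ}
    (hac : a < c) (hcb : c ≤ b) (hW : AntitoneOn W (Ioc a b))
    (hφ_pos : ∀ t ∈ Ioc a c, 0 ≤ φ t) (hφ_neg : ∀ t ∈ Ioc c b, φ t ≤ 0)
    (hφ : IntervalIntegrable φ volume a b)
    (hWφ : IntervalIntegrable (fun t => W t * φ t) volume a b) :
    W c * ∫ t in a..b, φ t ≤ ∫ t in a..b, W t * φ t := by
  rw [← intervalIntegral.integral_const_mul]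
  refine integral_mono_on_of_le_Ioo (hac.le.trans hcb) (hφ.const_mul _) hWφ fun t ht => ?_
  have hc : c ∈ Ioc a b := ⟨hac, hcb⟩
  have ht' : t ∈ Ioc a b := Ioo_subset_Ioc_self ht
  rcases le_or_gt t c with htc | hct
  · exact mul_le_mul_of_nonneg_right (hW ht' hc htc) (hφ_pos t ⟨ht.1, htc⟩)
  · exact mul_le_mul_of_nonpos_right (hW hc ht' hct.le) (hφ_neg t ⟨hct, ht'.2⟩)

lemma integral_inv_sqrt_add {δ : ℝ} (hδ : 0 < δ) :
    ∫ t in (0:ℝ)..1, (√(t + δ))⁻¹ = 2 * (√(1 + δ) - √δ) := by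
  have h : ∀ t ∈ uIcc (0:ℝ) 1, (√(t + δ))⁻¹ = (t + δ) ^ (-(1 / 2) : ℝ) := by
    intro t ht
    rw [uIcc_of_le zero_le_one] at ht
    rw [rpow_neg (by linarith [ht.1]), sqrt_eq_rpow]
  rw [integral_congr h, integral_comp_add_right (fun x => x ^ (-(1 / 2) : ℝ)),
    integral_rpow (Or.inl (by norm_num)), sqrt_eq_rpow, sqrt_eq_rpow]
  norm_num
  ring

lemma three_halves_le_integral_inv_sqrt_add {δ : ℝ} (hδ : 0 < δ) (hδ' : δ ≤ 1 / 36) :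
    3 / 2 ≤ ∫ t in (0:ℝ)..1, (√(t + δ))⁻¹ := by
  have h1 : 1 ≤ √(1 + δ) := one_le_sqrt.2 (by linarith)
  have h2 : √δ ≤ 1 / 6 := by
    calc √δ ≤ √((1 / 6) ^ 2) := sqrt_le_sqrt (by linarith)
      _ = 1 / 6 := sqrt_sq (by norm_num)
  rw [integral_inv_sqrt_add hδ]
  linarith

lemma continuousOn_inv_sqrt_add {δ : ℝ} (hδ : 0 < δ) :
    ContinuousOn (fun t => (√(t + δ))⁻¹) (uIcc 0 1) := by
  refine ((continuous_sqrt.comp (continuous_add_const δ)).continuousOn).inv₀ fun t ht => ?_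
  rw [uIcc_of_le zero_le_one] at ht
  exact (sqrt_pos.2 (by linarith [ht.1])).ne'

lemma three_halves_mul_integral_le_integral_mul_inv_sqrt_add {W : ℝ → ℝ} {δ : ℝ}
    (hδ : 0 < δ) (hδ' : δ ≤ 1 / 36) (hW : AntitoneOn W (Ioc 0 1))
    (hW_nonneg : ∀ t ∈ Ioc (0:ℝ) 1, 0 ≤ W t) (hWi : IntervalIntegrable W volume 0 1) :
    3 / 2 * ∫ t in (0:ℝ)..1, W t ≤ ∫ t in (0:ℝ)..1, W t * (√(t + δ))⁻¹ := by
  have hg := continuousOn_inv_sqrt_add hδ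
  have hφ : IntervalIntegrable (fun t => (√(t + δ))⁻¹ - 3 / 2) volume 0 1 :=
    hg.intervalIntegrable.sub intervalIntegrable_const
  have hWφ : IntervalIntegrable (fun t => W t * ((√(t + δ))⁻¹ - 3 / 2)) volume 0 1 := by
    simpa only [mul_sub] using (hWi.mul_continuousOn hg).sub (hWi.mul_const _)
  have hφ_pos : ∀ t ∈ Ioc 0 (4 / 9 - δ), 0 ≤ (√(t + δ))⁻¹ - 3 / 2 := by
    intro t ht
    rw [sub_nonneg, le_inv_comm₀ (by norm_num) (sqrt_pos.2 (by linarith [ht.1])),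
      sqrt_le_left (by norm_num)]
    linarith [ht.2]
  have hφ_neg : ∀ t ∈ Ioc (4 / 9 - δ) 1, (√(t + δ))⁻¹ - 3 / 2 ≤ 0 := by
    intro t ht
    rw [sub_nonpos, inv_le_comm₀ (sqrt_pos.2 (by linarith [ht.1])) (by norm_num),
      le_sqrt (by norm_num) (by linarith [ht.1])]
    linarith [ht.1]
  have hc := mul_integral_le_integral_mul_of_antitoneOn (by linarith) (by linarith) hW
    hφ_pos hφ_neg hφ hWφ
  have hWc : 0 ≤ W (4 / 9 - δ) := hW_nonneg _ ⟨by linarith, by linarith⟩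
  have hφ_int : 0 ≤ ∫ t in (0:ℝ)..1, ((√(t + δ))⁻¹ - 3 / 2) := by
    rw [integral_sub hg.intervalIntegrable intervalIntegrable_const,
      intervalIntegral.integral_const, sub_zero, one_smul]
    linarith [three_halves_le_integral_inv_sqrt_add hδ hδ']
  simp only [mul_sub] at hc
  rw [integral_sub (hWi.mul_continuousOn hg) (hWi.mul_const _),
    intervalIntegral.integral_mul_const] at hc
  linarith [mul_nonneg hWc hφ_int]

namespace Complex

lemma re_cpow_neg_nonneg (u : ℂ) {s : ℝ} (hs0 : 0 ≤ s) (hs : s ≤ 1 / 2) :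
    0 ≤ (u ^ ((-s : ℝ) : ℂ)).re := by
  rw [cpow_ofReal_re]
  refine mul_nonneg (rpow_nonneg (norm_nonneg _) _) (cos_nonneg_of_mem_Icc ?_)
  have := abs_le.1 (abs_arg_le_pi u)
  constructor <;> nlinarith [pi_pos]

lemma mul_im_cpow_neg_nonneg {u : ℂ} (hu : u ∈ slitPlane) {σ s : ℝ} (hs0 : 0 ≤ s) (hs : s ≤ 1)
    (hσ : σ * u.im ≤ 0) : 0 ≤ σ * (u ^ ((-s : ℝ) : ℂ)).im := by
  rw [cpow_ofReal_im, mul_left_comm]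
  refine mul_nonneg (rpow_nonneg (norm_nonneg _) _) ?_
  rcases lt_trichotomy u.im 0 with h | h | h
  · have hθ := arg_neg_iff.2 h
    exact mul_nonneg (by nlinarith)
      (sin_nonneg_of_nonneg_of_le_pi (by nlinarith) (by nlinarith [neg_pi_lt_arg u]))
  · have hre : 0 < u.re := (mem_slitPlane_iff.1 hu).resolve_right (not_not.2 h)
    simp [arg_eq_zero_iff.2 ⟨hre.le, h⟩]
  · have hθ := arg_nonneg_iff.2 h.le
    exact mul_nonneg_of_nonpos_of_nonpos (by nlinarith)
      (sin_nonpos_of_nonpos_of_neg_pi_le (by nlinarith) (by nlinarith [arg_le_pi u]))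

lemma norm_le_re_one_sub_mul_I {w : ℂ} {σ : ℝ} (hσ : |σ| = 1) (hre : 0 ≤ w.re)
    (him : 0 ≤ σ * w.im) : ‖w‖ ≤ ((1 - σ * I) * w).re := by
  have him' : |w.im| = σ * w.im := by
    rw [← abs_of_nonneg him, abs_mul, hσ, one_mul]
  calc ‖w‖ ≤ |w.re| + |w.im| := norm_le_abs_re_add_abs_im w
    _ = ((1 - σ * I) * w).re := by rw [abs_of_nonneg hre, him']; simp

lemma norm_one_sub_mul_I {σ : ℝ} (hσ : |σ| = 1) : ‖1 - σ * I‖ = √2 := by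
  have hσ2 : σ ^ 2 = 1 := by rw [← sq_abs, hσ, one_pow]
  simp [norm_def, normSq_apply, ← sq, hσ2, one_add_one_eq_two]

end Complex

open Complex

lemma im_ne_zero_of_one_lt_norm {z : ℂ} (hz : 1 < ‖z‖)
    (hz' : ¬ (z.im = 0 ∧ (z.re < -1 ∨ 1 < z.re))) : z.im ≠ 0 := by
  intro him
  have hre : 1 < |z.re| := by
    rwa [← re_add_im z, him, ofReal_zero, zero_mul, add_zero, norm_real, Real.norm_eq_abs] at hz
  exact hz' ⟨him, by rcases lt_abs.1 hre with h | h <;> [right; left] <;> linarith⟩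

lemma one_sub_sq_mul_mem_slitPlane {z : ℂ} (hz : z.im ≠ 0) {t : ℝ} (ht : 0 ≤ t) :
    1 - z ^ 2 * t ∈ slitPlane := by
  rw [mem_slitPlane_iff]
  by_cases hre : z.re = 0
  · left
    simp only [sq, sub_re, one_re, mul_re, ofReal_re, ofReal_im, hre]
    nlinarith [mul_self_nonneg z.im]
  · rcases ht.eq_or_lt with rfl | ht
    · simp
    · right
      have hsq_im : z.re * z.im + z.im * z.re ≠ 0 := by
        rw [mul_comm z.im, ← two_mul]; exact mul_ne_zero two_ne_zero (mul_ne_zero hre hz)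
      simpa [sq, ht.ne'] using hsq_im

lemma exists_norm_le_re_mul_cpow_one_sub_sq_mul {z : ℂ} (hz : z.im ≠ 0) {s : ℝ} (hs0 : 0 ≤ s)
    (hs : s ≤ 1 / 2) : ∃ ζ : ℂ, ‖ζ‖ = √2 ∧ ∀ t : ℝ, 0 ≤ t →
      ‖(1 - z ^ 2 * t) ^ ((-s : ℝ) : ℂ)‖ ≤ (ζ * (1 - z ^ 2 * t) ^ ((-s : ℝ) : ℂ)).re := by
  -- `(1 - z²t).im = -(z²).im * t` has a fixed sign, opposite to that of `σ`
  obtain ⟨σ, hσ, hσz⟩ : ∃ σ : ℝ, |σ| = 1 ∧ 0 ≤ σ * (z ^ 2).im := by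
    rcases le_total 0 (z ^ 2).im with h | h
    · exact ⟨1, abs_one, by linarith⟩
    · exact ⟨-1, by norm_num, by linarith⟩
  refine ⟨1 - σ * I, norm_one_sub_mul_I hσ, fun t ht => norm_le_re_one_sub_mul_I hσ
    (re_cpow_neg_nonneg _ hs0 hs)
    (mul_im_cpow_neg_nonneg (one_sub_sq_mul_mem_slitPlane hz ht) hs0 (by linarith) ?_)⟩
  have him : (1 - z ^ 2 * t).im = -((z ^ 2).im * t) := by simp
  rw [him]
  nlinarith

lemma inv_sqrt_add_le_norm_mul_norm_cpow {z : ℂ} (hz : z ≠ 0) {t : ℝ} (ht : 0 ≤ t)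
    (hu : 1 - z ^ 2 * t ≠ 0) {s : ℝ} (hs0 : 0 ≤ s) (hs : s ≤ 1 / 2) :
    (√(t + (‖z‖ ^ 2)⁻¹))⁻¹ ≤ ‖z‖ * ‖(1 - z ^ 2 * t) ^ ((-s : ℝ) : ℂ)‖ := by
  set X := 1 + ‖z‖ ^ 2 * t
  have hz0 : 0 < ‖z‖ := norm_pos_iff.2 hz
  have hX : 1 ≤ X := by have := mul_nonneg (sq_nonneg ‖z‖) ht; linarith
  have hu_le : ‖1 - z ^ 2 * t‖ ≤ X :=
    calc ‖1 - z ^ 2 * t‖ ≤ ‖(1:ℂ)‖ + ‖z ^ 2 * t‖ := norm_sub_le _ _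
      _ = X := by rw [norm_one, norm_mul, norm_pow, norm_real, Real.norm_of_nonneg ht]
  have hsqrt : √(t + (‖z‖ ^ 2)⁻¹) = √X / ‖z‖ := by
    rw [show t + (‖z‖ ^ 2)⁻¹ = X / ‖z‖ ^ 2 by field_simp; ring, sqrt_div' _ (sq_nonneg _),
      sqrt_sq hz0.le]
  calc (√(t + (‖z‖ ^ 2)⁻¹))⁻¹ = ‖z‖ * X ^ (-(1 / 2) : ℝ) := by
        rw [hsqrt, inv_div, rpow_neg (by linarith : 0 ≤ X), ← sqrt_eq_rpow, div_eq_mul_inv]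
    _ ≤ ‖z‖ * X ^ (-s) := by gcongr
    _ ≤ ‖z‖ * ‖1 - z ^ 2 * t‖ ^ (-s) := mul_le_mul_of_nonneg_left
        (rpow_le_rpow_of_nonpos (norm_pos_iff.2 hu) hu_le (by linarith)) hz0.le
    _ = ‖z‖ * ‖(1 - z ^ 2 * t) ^ ((-s : ℝ) : ℂ)‖ := by rw [norm_cpow_real]

lemma integral_norm_le_norm_mul_norm_integral {f : ℝ → ℂ} {a b : ℝ} (hab : a ≤ b)
    (hf : IntervalIntegrable f volume a b) (ζ : ℂ)
    (h : ∀ t ∈ Icc a b, ‖f t‖ ≤ (ζ * f t).re) :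
    ∫ t in a..b, ‖f t‖ ≤ ‖ζ‖ * ‖∫ t in a..b, f t‖ := by
  have hζf := hf.const_mul ζ
  calc ∫ t in a..b, ‖f t‖ ≤ ∫ t in a..b, (ζ * f t).re :=
        integral_mono_on hab hf.norm ⟨hζf.1.re, hζf.2.re⟩ h
    _ = (ζ * ∫ t in a..b, f t).re := by
        rw [← intervalIntegral.integral_const_mul]; exact intervalIntegral_re hζf
    _ ≤ ‖ζ * ∫ t in a..b, f t‖ := re_le_norm _
    _ = ‖ζ‖ * ‖∫ t in a..b, f t‖ := norm_mul _ _

lemma integral_mul_inv_sqrt_add_le {W : ℝ → ℝ} (hW_nonneg : ∀ t ∈ Icc (0:ℝ) 1, 0 ≤ W t)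
    (hWi : IntervalIntegrable W volume 0 1) {z : ℂ} (hz : z.im ≠ 0) {s : ℝ} (hs0 : 0 ≤ s)
    (hs : s ≤ 1 / 2) :
    ∫ t in (0:ℝ)..1, W t * (√(t + (‖z‖ ^ 2)⁻¹))⁻¹ ≤
      √2 * (‖z‖ * ‖∫ t in (0:ℝ)..1, (W t : ℂ) * (1 - z ^ 2 * t) ^ ((-s : ℝ) : ℂ)‖) := by
  set u : ℝ → ℂ := fun t => (1 - z ^ 2 * t) ^ ((-s : ℝ) : ℂ)
  have hz0 : z ≠ 0 := fun h => hz (by simp [h])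
  have hslit : ∀ t ∈ Icc (0:ℝ) 1, 1 - z ^ 2 * t ∈ slitPlane :=
    fun t ht => one_sub_sq_mul_mem_slitPlane hz ht.1
  have hu : ContinuousOn u (uIcc 0 1) := by
    rw [uIcc_of_le zero_le_one]
    exact ContinuousOn.cpow_const (by fun_prop) hslit
  have hf : IntervalIntegrable (fun t => (W t : ℂ) * u t) volume 0 1 :=
    IntervalIntegrable.mul_continuousOn ⟨hWi.1.ofReal, hWi.2.ofReal⟩ hu
  have hg : IntervalIntegrable (fun t => W t * (√(t + (‖z‖ ^ 2)⁻¹))⁻¹) volume 0 1 :=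
    hWi.mul_continuousOn (continuousOn_inv_sqrt_add (inv_pos.2 (pow_pos (norm_pos_iff.2 hz0) 2)))
  have hnorm : ∀ t ∈ Icc (0:ℝ) 1, ‖(W t : ℂ) * u t‖ = W t * ‖u t‖ := fun t ht => by
    rw [norm_mul, norm_real, Real.norm_of_nonneg (hW_nonneg t ht)]
  obtain ⟨ζ, hζ, hsector⟩ := exists_norm_le_re_mul_cpow_one_sub_sq_mul hz hs0 hs
  calc ∫ t in (0:ℝ)..1, W t * (√(t + (‖z‖ ^ 2)⁻¹))⁻¹
      ≤ ∫ t in (0:ℝ)..1, ‖z‖ * ‖(W t : ℂ) * u t‖ :=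
        integral_mono_on zero_le_one hg (hf.norm.const_mul _) fun t ht => by
          rw [hnorm t ht, mul_left_comm]
          exact mul_le_mul_of_nonneg_left (inv_sqrt_add_le_norm_mul_norm_cpow hz0 ht.1
            (slitPlane_ne_zero (hslit t ht)) hs0 hs) (hW_nonneg t ht)
    _ = ‖z‖ * ∫ t in (0:ℝ)..1, ‖(W t : ℂ) * u t‖ := intervalIntegral.integral_const_mul _ _
    _ ≤ ‖z‖ * (√2 * ‖∫ t in (0:ℝ)..1, (W t : ℂ) * u t‖) := by
        rw [← hζ]
        refine mul_le_mul_of_nonneg_left (integral_norm_le_norm_mul_norm_integral zero_le_one hf ζ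
          fun t ht => ?_) (norm_nonneg _)
        rw [hnorm t ht, mul_left_comm, re_ofReal_mul]
        exact mul_le_mul_of_nonneg_left (hsector t ht.1) (hW_nonneg t ht)
    _ = √2 * (‖z‖ * ‖∫ t in (0:ℝ)..1, (W t : ℂ) * u t‖) := by ring

theorem Ftilde_large_far_from_origin (a b : ℝ) (ha : a ∈ Set.Ico (0 : ℝ) 1)
    (hb : b ∈ Set.Ico (0 : ℝ) 1) (z : ℂ) (hz : 6 ≤ ‖z‖)
    (hz' : ¬ (z.im = 0 ∧ (z.re < -1 ∨ 1 < z.re))) :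
    1 < ‖Ftilde a b z‖ := by
  obtain ⟨ha0, ha1⟩ := ha
  obtain ⟨hb0, hb1⟩ := hb
  have hWi := intervalIntegrable_eulerWeight hb0 hb1
  have hB : 0 < ∫ t in (0:ℝ)..1, eulerWeight b t :=
    intervalIntegral_pos_of_pos_on hWi (fun t ht => eulerWeight_pos b ht) one_pos
  have hδ : (‖z‖ ^ 2)⁻¹ ≤ 1 / 36 := by
    rw [one_div]; exact inv_anti₀ (by norm_num) (by nlinarith)
  set I := ∫ t in (0:ℝ)..1, (eulerWeight b t : ℂ) * (1 - z ^ 2 * t) ^ ((-((1 - a) / 2) : ℝ) : ℂ)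
  have key : 3 / 2 * ∫ t in (0:ℝ)..1, eulerWeight b t ≤ √2 * (‖z‖ * ‖I‖) :=
    (three_halves_mul_integral_le_integral_mul_inv_sqrt_add (by positivity) hδ
      (antitoneOn_eulerWeight hb0) (fun t ht => eulerWeight_nonneg b (Ioc_subset_Icc_self ht))
      hWi).trans
    (integral_mul_inv_sqrt_add_le (fun t ht => eulerWeight_nonneg b ht) hWi
      (im_ne_zero_of_one_lt_norm (by linarith) hz') (by linarith) (by linarith))
  have hsqrt2 : √2 < 3 / 2 := by
    rw [sqrt_lt' (by norm_num)]; norm_num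
  have hlt : ∫ t in (0:ℝ)..1, eulerWeight b t < ‖z‖ * ‖I‖ := by
    by_contra! h
    linarith [mul_le_mul_of_nonneg_left h (sqrt_nonneg 2), mul_lt_mul_of_pos_right hsqrt2 hB]
  change 1 < ‖((betaFun ((1 - b) / 2) (1 + b / 2) : ℝ) : ℂ)⁻¹ * (z * I)‖
  rwa [norm_mul, norm_inv, norm_real, betaFun_eq_integral_eulerWeight, Real.norm_of_nonneg hB.le,
    norm_mul, ← div_eq_inv_mul, one_lt_div hB]
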